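/- Under the assumptions of the kappa-weighting identity and assuming E[Y(1)²] < ∞, for every bounded measurable function μ of X, E[κ⁽¹⁾·(Y - μ(X))²] = E[(Y(1) - μ(X))²·1{D(1) > D(0)}]; consequently, if P(D(1) > D(0)) > 0, the minimizer of μ ↦ E[κ⁽¹⁾(Y - μ(X))²] over bounded measurable μ is given (a.s. on {P(D(1)>D(0)|X)>0}) by μ₀⁽¹⁾(x) = E[Y(1) | X = x, D(1) > D(0)]. -/

import Mathlib

/-!
Where `κ⁽¹⁾ ≠ 0` we have `D = 1`, hence `Y = Y(1)`, and splitting on the binary instrument gives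
`κ⁽¹⁾ (Y - μ(X))² = Z T₁ / g₀ - (1 - Z) T₀ / (1 - g₀)` with `T_d = D(d) (Y(1) - μ(X))²`.
Conditional independence makes each `T_d` conditionally uncorrelated with `Z` given `X` (expand
the square; its coefficients are functions of `X`), so inverse propensity weighting recovers
`E[T₁] - E[T₀]`, which by monotonicity is the complier-restricted error. The weight `1 / g₀` is
unbounded; it is pulled out of the conditional expectation on the Lebesgue side, where no
integrability is needed. The minimisation is the least-squares property of the complier
conditional mean: the cross term vanishes because `1{D(1) > D(0)} (Y(1) - μ₀(X))` has
conditional mean zero given `X`.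
-/

open MeasureTheory Real

def sigmaX {Ω 𝓧 : Type*} [MeasurableSpace 𝓧] (X : Ω → 𝓧) : MeasurableSpace Ω :=
  MeasurableSpace.comap X inferInstance

open scoped ENNReal

section CondExp

variable {Ω : Type*} {m : MeasurableSpace Ω} [mΩ : MeasurableSpace Ω] {P : Measure Ω}

theorem lintegral_mul_condLExp (hm : m ≤ mΩ) [SigmaFinite (P.trim hm)] {V X : Ω → ℝ≥0∞}
    (hV : Measurable[m] V) (hX : AEMeasurable X P) :
    ∫⁻ ω, V ω * P⁻[X|m] ω ∂P = ∫⁻ ω, V ω * X ω ∂P := by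
  have htrim : (P.withDensity X).trim hm = (P.trim hm).withDensity (P⁻[X|m]) := by
    refine @Measure.ext _ m _ _ fun s hs => ?_
    rw [trim_measurableSet_eq hm hs, withDensity_apply _ (hm s hs), withDensity_apply _ hs,
      setLIntegral_condLExp_trim hm _ _ hs]
  calc ∫⁻ ω, V ω * P⁻[X|m] ω ∂P = ∫⁻ ω, V ω * P⁻[X|m] ω ∂P.trim hm :=
        (lintegral_trim hm (hV.mul (measurable_condLExp _ _ _))).symm
    _ = ∫⁻ ω, V ω ∂(P.trim hm).withDensity (P⁻[X|m]) := by
        rw [lintegral_withDensity_eq_lintegral_mul _ (measurable_condLExp _ _ _) hV]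
        simp only [Pi.mul_apply, mul_comm]
    _ = ∫⁻ ω, V ω ∂P.withDensity X := by rw [← htrim, lintegral_trim hm hV]
    _ = ∫⁻ ω, V ω * X ω ∂P := by
        rw [lintegral_withDensity_eq_lintegral_mul₀ hX (hV.mono hm le_rfl).aemeasurable]
        simp only [Pi.mul_apply, mul_comm]

theorem lintegral_ofReal_mul_condExp (hm : m ≤ mΩ) [SigmaFinite (P.trim hm)] {W F : Ω → ℝ}
    (hW : StronglyMeasurable[m] W) (hW0 : 0 ≤ᵐ[P] W) (hF : Integrable F P) (hF0 : 0 ≤ᵐ[P] F) :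
    ∫⁻ ω, ENNReal.ofReal (W ω * P[F|m] ω) ∂P = ∫⁻ ω, ENNReal.ofReal (W ω * F ω) ∂P := by
  have hV : Measurable[m] fun ω => ENNReal.ofReal (W ω) :=
    ENNReal.measurable_ofReal.comp hW.measurable
  calc ∫⁻ ω, ENNReal.ofReal (W ω * P[F|m] ω) ∂P
      = ∫⁻ ω, ENNReal.ofReal (W ω) * P⁻[fun ω => ENNReal.ofReal (F ω)|m] ω ∂P := by
        refine lintegral_congr_ae ?_
        filter_upwards [hW0, condLExp_ofReal m hF hF0] with ω hω h
        rw [h, ENNReal.ofReal_mul hω]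
    _ = ∫⁻ ω, ENNReal.ofReal (W ω) * ENNReal.ofReal (F ω) ∂P :=
        lintegral_mul_condLExp hm hV hF.1.aemeasurable.ennreal_ofReal
    _ = ∫⁻ ω, ENNReal.ofReal (W ω * F ω) ∂P := by
        refine lintegral_congr_ae ?_
        filter_upwards [hW0] with ω hω
        rw [ENNReal.ofReal_mul hω]

theorem integrable_and_integral_eq_of_lintegral_ofReal_eq {F G : Ω → ℝ}
    (hF : AEStronglyMeasurable F P) (hF0 : 0 ≤ᵐ[P] F) (hG : Integrable G P) (hG0 : 0 ≤ᵐ[P] G)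
    (h : ∫⁻ ω, ENNReal.ofReal (F ω) ∂P = ∫⁻ ω, ENNReal.ofReal (G ω) ∂P) :
    Integrable F P ∧ ∫ ω, F ω ∂P = ∫ ω, G ω ∂P := by
  have hG' := ofReal_integral_eq_lintegral_ofReal hG hG0
  refine ⟨⟨hF, (hasFiniteIntegral_iff_ofReal hF0).2 ?_⟩, ?_⟩
  · rw [h, ← hG']; exact ENNReal.ofReal_lt_top
  · rw [integral_eq_lintegral_of_nonneg_ae hF0 hF, h, ← hG',
      ENNReal.toReal_ofReal (integral_nonneg_of_ae hG0)]

theorem condExp_one_sub (hm : m ≤ mΩ) [IsFiniteMeasure P] {Z : Ω → ℝ} (hZ : Integrable Z P) :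
    P[1 - Z|m] =ᵐ[P] 1 - P[Z|m] := by
  have h1 : Integrable (1 : Ω → ℝ) P := integrable_const 1
  have h := condExp_sub h1 hZ m
  rwa [show P[1|m] = 1 from condExp_const hm (1 : ℝ)] at h

def CondUncorrelated (P : Measure Ω) (m : MeasurableSpace Ω) (ψ Z : Ω → ℝ) : Prop :=
  P[ψ * Z|m] =ᵐ[P] P[ψ|m] * P[Z|m]

namespace CondUncorrelated

variable {ψ ψ' Z : Ω → ℝ}

theorem add (h : CondUncorrelated P m ψ Z) (h' : CondUncorrelated P m ψ' Z)
    (hψ : Integrable ψ P) (hψ' : Integrable ψ' P)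
    (hψZ : Integrable (ψ * Z) P) (hψ'Z : Integrable (ψ' * Z) P) :
    CondUncorrelated P m (ψ + ψ') Z := by
  unfold CondUncorrelated at *
  rw [add_mul]
  filter_upwards [condExp_add hψZ hψ'Z m, condExp_add hψ hψ' m, h, h'] with ω h1 h2 h3 h4
  simp only [Pi.add_apply, Pi.mul_apply] at h1 h2 h3 h4 ⊢
  rw [h1, h2, h3, h4]; ring

theorem mul_left (hm : m ≤ mΩ) [IsFiniteMeasure P] (h : CondUncorrelated P m ψ Z) {a : Ω → ℝ}
    {K : ℝ} (ha : StronglyMeasurable[m] a) (haK : ∀ᵐ ω ∂P, ‖a ω‖ ≤ K)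
    (hψ : Integrable ψ P) (hψZ : Integrable (ψ * Z) P) :
    CondUncorrelated P m (a * ψ) Z := by
  unfold CondUncorrelated at *
  rw [mul_assoc]
  filter_upwards [condExp_stronglyMeasurable_mul_of_bound hm ha hψZ K haK,
    condExp_stronglyMeasurable_mul_of_bound hm ha hψ K haK, h] with ω h1 h2 h3
  simp only [Pi.mul_apply] at h1 h2 h3 ⊢
  rw [h1, h2, h3]; ring

theorem one_sub (hm : m ≤ mΩ) [IsFiniteMeasure P] (h : CondUncorrelated P m ψ Z)
    (hψ : Integrable ψ P) (hZ : Integrable Z P) (hψZ : Integrable (ψ * Z) P) :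
    CondUncorrelated P m ψ (1 - Z) := by
  have h1 : Integrable (1 : Ω → ℝ) P := integrable_const 1
  unfold CondUncorrelated at *
  rw [mul_sub, mul_one]
  filter_upwards [condExp_sub hψ hψZ m, condExp_sub h1 hZ m, h] with ω hψ' hZ' hψZ'
  rw [show P[1|m] = 1 from condExp_const hm (1 : ℝ)] at hZ'
  simp only [Pi.sub_apply, Pi.mul_apply, Pi.one_apply] at hψ' hZ' hψZ' ⊢
  rw [hψ', hZ', hψZ']; ring

end CondUncorrelated

theorem CondUncorrelated.mul_sq_sub (hm : m ≤ mΩ) [IsFiniteMeasure P] {d Y Z a : Ω → ℝ}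
    {C L K : ℝ}
    (hφ : ∀ φ : ℝ × ℝ → ℝ, Measurable φ → Integrable (fun ω => φ (Y ω, d ω)) P →
      CondUncorrelated P m (fun ω => φ (Y ω, d ω)) Z)
    (hY : MemLp Y 2 P) (hd : AEStronglyMeasurable d P) (hdC : ∀ᵐ ω ∂P, ‖d ω‖ ≤ C)
    (hZ : AEStronglyMeasurable Z P) (hZL : ∀ᵐ ω ∂P, ‖Z ω‖ ≤ L)
    (ha : StronglyMeasurable[m] a) (haK : ∀ᵐ ω ∂P, ‖a ω‖ ≤ K) :
    CondUncorrelated P m (fun ω => d ω * (Y ω - a ω) ^ 2) Z := by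
  have hexpand : (fun ω => d ω * (Y ω - a ω) ^ 2)
      = (fun ω => d ω * Y ω ^ 2) + (fun ω => -2 * a ω) * (fun ω => d ω * Y ω) + (a * a) * d := by
    funext ω; simp only [Pi.add_apply, Pi.mul_apply]; ring
  have hmulZ {ψ : Ω → ℝ} (hψ : Integrable ψ P) : Integrable (ψ * Z) P := hψ.mul_bdd hZ hZL
  have i2 : Integrable (fun ω => d ω * Y ω ^ 2) P := hY.integrable_sq.bdd_mul hd hdC
  have i1 : Integrable (fun ω => d ω * Y ω) P := (hY.integrable one_le_two).bdd_mul hd hdC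
  have i0 : Integrable d P := Integrable.of_bound hd C hdC
  have h2a : ∀ᵐ ω ∂P, ‖-2 * a ω‖ ≤ 2 * K := by
    filter_upwards [haK] with ω h
    simpa [abs_mul] using mul_le_mul_of_nonneg_left h zero_le_two
  have haa : ∀ᵐ ω ∂P, ‖(a * a) ω‖ ≤ K * K := by
    filter_upwards [haK] with ω h
    simpa only [Pi.mul_apply, norm_mul] using
      mul_le_mul h h (norm_nonneg _) ((norm_nonneg _).trans h)
  have h2am : StronglyMeasurable[m] fun ω => -2 * a ω := stronglyMeasurable_const.mul ha
  have i1' : Integrable ((fun ω => -2 * a ω) * fun ω => d ω * Y ω) P :=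
    i1.bdd_mul (h2am.mono hm).aestronglyMeasurable h2a
  have i0' : Integrable ((a * a) * d) P :=
    i0.bdd_mul ((ha.mul ha).mono hm).aestronglyMeasurable haa
  have c2 := hφ (fun p => p.2 * p.1 ^ 2) (by fun_prop) i2
  have c1 := (hφ (fun p => p.2 * p.1) (by fun_prop) i1).mul_left hm h2am h2a i1 (hmulZ i1)
  have c0 := (hφ Prod.snd measurable_snd i0).mul_left hm (ha.mul ha) haa i0 (hmulZ i0)
  rw [hexpand]
  exact (c2.add c1 i2 i1' (hmulZ i2) (hmulZ i1')).add c0 (i2.add i1') i0'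
    (hmulZ (i2.add i1')) (hmulZ i0')

theorem integral_mul_div_condExp (hm : m ≤ mΩ) [IsFiniteMeasure P] {Z T : Ω → ℝ}
    (hZ0 : 0 ≤ᵐ[P] Z) (hpos : ∀ᵐ ω ∂P, 0 < P[Z|m] ω) (hT : Integrable T P) (hT0 : 0 ≤ᵐ[P] T)
    (hTZ : Integrable (T * Z) P) (h : CondUncorrelated P m T Z) :
    Integrable (fun ω => Z ω * T ω / P[Z|m] ω) P ∧
      ∫ ω, Z ω * T ω / P[Z|m] ω ∂P = ∫ ω, T ω ∂P := by
  have hg : StronglyMeasurable[m] (P[Z|m]) := stronglyMeasurable_condExp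
  have hW0 : 0 ≤ᵐ[P] (P[Z|m])⁻¹ := by
    filter_upwards [hpos] with ω hω using inv_nonneg.2 hω.le
  refine integrable_and_integral_eq_of_lintegral_ofReal_eq ?_ ?_ hT hT0 ?_
  · exact ((hTZ.1.aemeasurable.div (hg.mono hm).measurable.aemeasurable).congr
      (.of_forall fun ω => by simp [mul_comm])).aestronglyMeasurable
  · filter_upwards [hZ0, hT0, hpos] with ω h1 h2 h3 using div_nonneg (mul_nonneg h1 h2) h3.le
  calc ∫⁻ ω, ENNReal.ofReal (Z ω * T ω / P[Z|m] ω) ∂P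
      = ∫⁻ ω, ENNReal.ofReal ((P[Z|m])⁻¹ ω * (T * Z) ω) ∂P := by
        simp only [Pi.inv_apply, Pi.mul_apply]; congr with ω; ring_nf
    _ = ∫⁻ ω, ENNReal.ofReal ((P[Z|m])⁻¹ ω * P[T * Z|m] ω) ∂P :=
        (lintegral_ofReal_mul_condExp hm hg.measurable.inv.stronglyMeasurable hW0 hTZ
          (by filter_upwards [hZ0, hT0] with ω h1 h2 using mul_nonneg h2 h1)).symm
    _ = ∫⁻ ω, ENNReal.ofReal (1 * P[T|m] ω) ∂P := by
        refine lintegral_congr_ae ?_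
        filter_upwards [h, hpos] with ω h1 h2
        simp only [h1, Pi.inv_apply, Pi.mul_apply]
        field_simp
    _ = ∫⁻ ω, ENNReal.ofReal (1 * T ω) ∂P :=
        lintegral_ofReal_mul_condExp hm stronglyMeasurable_const
          (.of_forall fun _ => zero_le_one) hT hT0
    _ = ∫⁻ ω, ENNReal.ofReal (T ω) ∂P := by simp only [one_mul]

theorem integral_mul_eq_zero_of_condExp_eq_zero (hm : m ≤ mΩ) [IsFiniteMeasure P]
    {b ψ : Ω → ℝ} {K : ℝ} (hb : StronglyMeasurable[m] b) (hbK : ∀ᵐ ω ∂P, ‖b ω‖ ≤ K)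
    (hψ : Integrable ψ P) (h : P[ψ|m] =ᵐ[P] 0) :
    ∫ ω, b ω * ψ ω ∂P = 0 := by
  calc ∫ ω, b ω * ψ ω ∂P = ∫ ω, P[b * ψ|m] ω ∂P := (integral_condExp hm).symm
    _ = ∫ ω, b ω * P[ψ|m] ω ∂P :=
        integral_congr_ae (condExp_stronglyMeasurable_mul_of_bound hm hb hψ K hbK)
    _ = 0 := by
        rw [integral_congr_ae (h.mono fun ω hω => by rw [hω, Pi.zero_apply, mul_zero])]
        simp

theorem condExp_mul_sub_eq_zero (hm : m ≤ mΩ) [IsFiniteMeasure P] {c Y a₀ : Ω → ℝ} {C K₀ : ℝ}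
    (hc : AEStronglyMeasurable c P) (hcC : ∀ᵐ ω ∂P, ‖c ω‖ ≤ C) (hY : Integrable Y P)
    (ha₀ : StronglyMeasurable[m] a₀) (ha₀K : ∀ᵐ ω ∂P, ‖a₀ ω‖ ≤ K₀)
    (h : (fun ω => a₀ ω * P[c|m] ω) =ᵐ[P] P[fun ω => Y ω * c ω|m]) :
    P[fun ω => c ω * (Y ω - a₀ ω)|m] =ᵐ[P] 0 := by
  have hc1 : Integrable c P := Integrable.of_bound hc C hcC
  have ia₀c : Integrable (a₀ * c) P := hc1.bdd_mul (ha₀.mono hm).aestronglyMeasurable ha₀K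
  have hsplit : (fun ω => c ω * (Y ω - a₀ ω)) = (fun ω => Y ω * c ω) - a₀ * c := by
    funext ω; simp only [Pi.sub_apply, Pi.mul_apply]; ring
  rw [hsplit]
  filter_upwards [condExp_sub (hY.mul_bdd hc hcC) ia₀c m,
    condExp_stronglyMeasurable_mul_of_bound hm ha₀ hc1 K₀ ha₀K, h] with ω h₁ h₂ h₃
  simp only [Pi.sub_apply, Pi.mul_apply, Pi.zero_apply] at h₁ h₂ h₃ ⊢
  rw [h₁, h₂, h₃, sub_self]

theorem integral_mul_sq_sub_le_of_condExp (hm : m ≤ mΩ) [IsFiniteMeasure P]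
    {c Y a₀ a : Ω → ℝ} {C K₀ K : ℝ}
    (hc : AEStronglyMeasurable c P) (hc0 : 0 ≤ᵐ[P] c) (hcC : ∀ᵐ ω ∂P, ‖c ω‖ ≤ C)
    (hY : MemLp Y 2 P) (ha₀ : StronglyMeasurable[m] a₀) (ha₀K : ∀ᵐ ω ∂P, ‖a₀ ω‖ ≤ K₀)
    (ha : StronglyMeasurable[m] a) (haK : ∀ᵐ ω ∂P, ‖a ω‖ ≤ K)
    (h : (fun ω => a₀ ω * P[c|m] ω) =ᵐ[P] P[fun ω => Y ω * c ω|m]) :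
    ∫ ω, c ω * (Y ω - a₀ ω) ^ 2 ∂P ≤ ∫ ω, c ω * (Y ω - a ω) ^ 2 ∂P := by
  set b : Ω → ℝ := fun ω => a₀ ω - a ω
  set ψ : Ω → ℝ := fun ω => c ω * (Y ω - a₀ ω)
  have hb : StronglyMeasurable[m] b := ha₀.sub ha
  have hbK : ∀ᵐ ω ∂P, ‖b ω‖ ≤ K₀ + K := by
    filter_upwards [ha₀K, haK] with ω h₀ h₁ using (norm_sub_le _ _).trans (add_le_add h₀ h₁)
  have ha₀L : MemLp a₀ 2 P := MemLp.of_bound (ha₀.mono hm).aestronglyMeasurable K₀ ha₀K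
  have hbL : MemLp b 2 P := MemLp.of_bound (hb.mono hm).aestronglyMeasurable _ hbK
  have hc1 : Integrable c P := Integrable.of_bound hc C hcC
  have hψ : Integrable ψ P := ((hY.sub ha₀L).integrable one_le_two).bdd_mul hc hcC
  have hcross : ∫ ω, b ω * ψ ω ∂P = 0 := integral_mul_eq_zero_of_condExp_eq_zero hm hb hbK hψ
    (condExp_mul_sub_eq_zero hm hc hcC (hY.integrable one_le_two) ha₀ ha₀K h)
  have i₀ : Integrable (fun ω => c ω * (Y ω - a₀ ω) ^ 2) P :=
    (hY.sub ha₀L).integrable_sq.bdd_mul hc hcC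
  have ib : Integrable (fun ω => c ω * b ω ^ 2) P := hbL.integrable_sq.bdd_mul hc hcC
  have iψ : Integrable (fun ω => b ω * ψ ω) P :=
    hψ.bdd_mul (hb.mono hm).aestronglyMeasurable hbK
  calc ∫ ω, c ω * (Y ω - a₀ ω) ^ 2 ∂P
      ≤ ∫ ω, c ω * (Y ω - a₀ ω) ^ 2 ∂P + ∫ ω, c ω * b ω ^ 2 ∂P :=
        le_add_of_nonneg_right (integral_nonneg_of_ae
          (hc0.mono fun ω hω => mul_nonneg hω (sq_nonneg _)))
    _ = ∫ ω, c ω * (Y ω - a₀ ω) ^ 2 ∂P + ∫ ω, c ω * b ω ^ 2 ∂P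
          + 2 * ∫ ω, b ω * ψ ω ∂P := by rw [hcross, mul_zero, add_zero]
    _ = ∫ ω, (c ω * (Y ω - a₀ ω) ^ 2 + c ω * b ω ^ 2 + 2 * (b ω * ψ ω)) ∂P := by
        have i₀b : Integrable (fun ω => c ω * (Y ω - a₀ ω) ^ 2 + c ω * b ω ^ 2) P := i₀.add ib
        rw [integral_add i₀b (iψ.const_mul 2), integral_add i₀ ib, integral_const_mul]
    _ = ∫ ω, c ω * (Y ω - a ω) ^ 2 ∂P := by
        congr with ω; simp only [b, ψ]; ring

end CondExp

theorem norm_le_one_of_eq_zero_or_eq_one {x : ℝ} (h : x = 0 ∨ x = 1) : ‖x‖ ≤ 1 := by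
  rcases h with rfl | rfl <;> norm_num

theorem nonneg_of_eq_zero_or_eq_one {x : ℝ} (h : x = 0 ∨ x = 1) : 0 ≤ x := by
  rcases h with rfl | rfl <;> norm_num

theorem kappa_mul_sq_sub_eq {z d₀ d₁ y₀ y₁ g a : ℝ} (hz : z = 0 ∨ z = 1)
    (hd₀ : d₀ = 0 ∨ d₀ = 1) (hd₁ : d₁ = 0 ∨ d₁ = 1) (hg₀ : g ≠ 0) (hg₁ : 1 - g ≠ 0) :
    (z * d₁ + (1 - z) * d₀) * (z - g) / (g * (1 - g))
        * ((z * d₁ + (1 - z) * d₀) * y₁ + (1 - (z * d₁ + (1 - z) * d₀)) * y₀ - a) ^ 2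
      = z * (d₁ * (y₁ - a) ^ 2) / g - (1 - z) * (d₀ * (y₁ - a) ^ 2) / (1 - g) := by
  rcases hz with rfl | rfl <;> rcases hd₀ with rfl | rfl <;> rcases hd₁ with rfl | rfl <;>
    field_simp <;> ring

theorem mul_sub_mul_eq_ite_lt {d₀ d₁ s : ℝ} (hd₀ : d₀ = 0 ∨ d₀ = 1) (hd₁ : d₁ = 0 ∨ d₁ = 1)
    (h : d₀ ≤ d₁) : d₁ * s - d₀ * s = if d₀ < d₁ then s else 0 := by
  rcases hd₀ with rfl | rfl <;> rcases hd₁ with rfl | rfl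
  · simp
  · simp
  · linarith
  · simp

section Kappa

variable {Ω : Type*} {m : MeasurableSpace Ω} [mΩ : MeasurableSpace Ω] {P : Measure Ω}

theorem integral_mul_div_condExp_of_mul_sq_sub (hm : m ≤ mΩ) [IsFiniteMeasure P]
    {Z d Y a : Ω → ℝ} {K : ℝ} (hZm : Measurable Z) (hZ01 : ∀ ω, Z ω = 0 ∨ Z ω = 1)
    (hdm : Measurable d) (hd01 : ∀ ω, d ω = 0 ∨ d ω = 1) (hY : MemLp Y 2 P)
    (hpos : ∀ᵐ ω ∂P, 0 < P[Z|m] ω)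
    (hφ : ∀ φ : ℝ × ℝ → ℝ, Measurable φ → Integrable (fun ω => φ (Y ω, d ω)) P →
      CondUncorrelated P m (fun ω => φ (Y ω, d ω)) Z)
    (ha : StronglyMeasurable[m] a) (haK : ∀ᵐ ω ∂P, ‖a ω‖ ≤ K) :
    Integrable (fun ω => Z ω * (d ω * (Y ω - a ω) ^ 2) / P[Z|m] ω) P ∧
      ∫ ω, Z ω * (d ω * (Y ω - a ω) ^ 2) / P[Z|m] ω ∂P = ∫ ω, d ω * (Y ω - a ω) ^ 2 ∂P := by
  have hZb : ∀ᵐ ω ∂P, ‖Z ω‖ ≤ 1 := .of_forall fun ω => norm_le_one_of_eq_zero_or_eq_one (hZ01 ω)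
  have hdb : ∀ᵐ ω ∂P, ‖d ω‖ ≤ 1 := .of_forall fun ω => norm_le_one_of_eq_zero_or_eq_one (hd01 ω)
  have hT : Integrable (fun ω => d ω * (Y ω - a ω) ^ 2) P :=
    (hY.sub (MemLp.of_bound (ha.mono hm).aestronglyMeasurable K haK)).integrable_sq.bdd_mul
      hdm.aestronglyMeasurable hdb
  exact integral_mul_div_condExp hm (.of_forall fun ω => nonneg_of_eq_zero_or_eq_one (hZ01 ω))
    hpos hT (.of_forall fun ω => mul_nonneg (nonneg_of_eq_zero_or_eq_one (hd01 ω)) (sq_nonneg _))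
    (hT.mul_bdd hZm.aestronglyMeasurable hZb)
    (CondUncorrelated.mul_sq_sub hm hφ hY hdm.aestronglyMeasurable hdb
      hZm.aestronglyMeasurable hZb ha haK)

theorem integral_kappa_mul_sq_sub (hm : m ≤ mΩ) [IsFiniteMeasure P]
    {Z D D0 D1 Y Y0 Y1 g₀ κ a : Ω → ℝ} {K : ℝ}
    (hZm : Measurable Z) (hD0m : Measurable D0) (hD1m : Measurable D1)
    (hZ01 : ∀ ω, Z ω = 0 ∨ Z ω = 1)
    (hD0 : ∀ ω, D0 ω = 0 ∨ D0 ω = 1) (hD1 : ∀ ω, D1 ω = 0 ∨ D1 ω = 1)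
    (hconsD : ∀ ω, D ω = Z ω * D1 ω + (1 - Z ω) * D0 ω)
    (hconsY : ∀ ω, Y ω = D ω * Y1 ω + (1 - D ω) * Y0 ω)
    (hmono : ∀ᵐ ω ∂P, D0 ω ≤ D1 ω) (hY1 : MemLp Y1 2 P)
    (hg₀ : g₀ =ᵐ[P] P[Z|m]) (hpos : ∀ᵐ ω ∂P, 0 < g₀ ω ∧ g₀ ω < 1)
    (hindep0 : ∀ φ : ℝ × ℝ → ℝ, Measurable φ → Integrable (fun ω => φ (Y1 ω, D0 ω)) P →
      CondUncorrelated P m (fun ω => φ (Y1 ω, D0 ω)) Z)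
    (hindep1 : ∀ φ : ℝ × ℝ → ℝ, Measurable φ → Integrable (fun ω => φ (Y1 ω, D1 ω)) P →
      CondUncorrelated P m (fun ω => φ (Y1 ω, D1 ω)) Z)
    (hκ : ∀ ω, κ ω = D ω * (Z ω - g₀ ω) / (g₀ ω * (1 - g₀ ω)))
    (ha : StronglyMeasurable[m] a) (haK : ∀ᵐ ω ∂P, ‖a ω‖ ≤ K) :
    ∫ ω, κ ω * (Y ω - a ω) ^ 2 ∂P
      = ∫ ω, (if D0 ω < D1 ω then (Y1 ω - a ω) ^ 2 else 0) ∂P := by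
  have hZb : ∀ᵐ ω ∂P, ‖Z ω‖ ≤ 1 := .of_forall fun ω => norm_le_one_of_eq_zero_or_eq_one (hZ01 ω)
  have hZ : Integrable Z P := Integrable.of_bound hZm.aestronglyMeasurable 1 hZb
  have h1Z : P[1 - Z|m] =ᵐ[P] 1 - P[Z|m] := condExp_one_sub hm hZ
  have hZ'01 (ω : Ω) : (1 - Z) ω = 0 ∨ (1 - Z) ω = 1 := by rcases hZ01 ω with h | h <;> simp [h]
  have hZ'm : Measurable (1 - Z) := measurable_const.sub hZm
  have hindep0' (φ : ℝ × ℝ → ℝ) (hφ : Measurable φ)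
      (hint : Integrable (fun ω => φ (Y1 ω, D0 ω)) P) :
      CondUncorrelated P m (fun ω => φ (Y1 ω, D0 ω)) (1 - Z) :=
    (hindep0 φ hφ hint).one_sub hm hint hZ (hint.mul_bdd hZm.aestronglyMeasurable hZb)
  have hipw₁ := integral_mul_div_condExp_of_mul_sq_sub hm hZm hZ01 hD1m hD1 hY1
    (by filter_upwards [hg₀, hpos] with ω h h' using h ▸ h'.1) hindep1 ha haK
  have hipw₀ := integral_mul_div_condExp_of_mul_sq_sub hm hZ'm hZ'01 hD0m hD0 hY1
    (by filter_upwards [h1Z, hg₀, hpos] with ω h h' h'' using by simp [h, ← h', h''.2])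
    hindep0' ha haK
  have hsq : Integrable (fun ω => (Y1 ω - a ω) ^ 2) P :=
    (hY1.sub (MemLp.of_bound (ha.mono hm).aestronglyMeasurable K haK)).integrable_sq
  calc ∫ ω, κ ω * (Y ω - a ω) ^ 2 ∂P
      = ∫ ω, (Z ω * (D1 ω * (Y1 ω - a ω) ^ 2) / P[Z|m] ω
          - (1 - Z) ω * (D0 ω * (Y1 ω - a ω) ^ 2) / P[1 - Z|m] ω) ∂P := by
        refine integral_congr_ae ?_
        filter_upwards [hg₀, hpos, h1Z] with ω hg₀ω hposω h1Zω
        rw [hκ, hconsY, hconsD, h1Zω, Pi.sub_apply, Pi.sub_apply, Pi.one_apply, ← hg₀ω]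
        exact kappa_mul_sq_sub_eq (hZ01 ω) (hD0 ω) (hD1 ω) hposω.1.ne' (sub_pos.2 hposω.2).ne'
    _ = ∫ ω, D1 ω * (Y1 ω - a ω) ^ 2 ∂P - ∫ ω, D0 ω * (Y1 ω - a ω) ^ 2 ∂P := by
        rw [integral_sub hipw₁.1 hipw₀.1, hipw₁.2, hipw₀.2]
    _ = ∫ ω, (if D0 ω < D1 ω then (Y1 ω - a ω) ^ 2 else 0) ∂P := by
        rw [← integral_sub
          (hsq.bdd_mul hD1m.aestronglyMeasurable
            (.of_forall fun ω => norm_le_one_of_eq_zero_or_eq_one (hD1 ω)))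
          (hsq.bdd_mul hD0m.aestronglyMeasurable
            (.of_forall fun ω => norm_le_one_of_eq_zero_or_eq_one (hD0 ω)))]
        exact integral_congr_ae (hmono.mono fun ω h => mul_sub_mul_eq_ite_lt (hD0 ω) (hD1 ω) h)

end Kappa

theorem stmt16_general {Ω 𝓧 : Type*} [MeasurableSpace Ω] [MeasurableSpace 𝓧]
    (P : Measure Ω) [IsProbabilityMeasure P]
    (X : Ω → 𝓧) (hX : Measurable X)
    (Z D D0 D1 Y Y0 Y1 : Ω → ℝ)
    (hZm : Measurable Z) (hD0m : Measurable D0) (hD1m : Measurable D1)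
    (hY1m : Measurable Y1)
    (hZ01 : ∀ ω, Z ω = 0 ∨ Z ω = 1)
    (hD0 : ∀ ω, D0 ω = 0 ∨ D0 ω = 1) (hD1 : ∀ ω, D1 ω = 0 ∨ D1 ω = 1)
    (hconsD : ∀ ω, D ω = Z ω * D1 ω + (1 - Z ω) * D0 ω)
    (hconsY : ∀ ω, Y ω = D ω * Y1 ω + (1 - D ω) * Y0 ω)
    (hmono : ∀ᵐ ω ∂P, D0 ω ≤ D1 ω)
    (hY1sq : Integrable (fun ω => (Y1 ω) ^ 2) P)
    (g₀ : Ω → ℝ) (hg₀ : g₀ =ᵐ[P] P[Z | sigmaX X])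
    (hpos : ∀ᵐ ω ∂P, 0 < g₀ ω ∧ g₀ ω < 1)
    -- conditional independence of (Y0, Y1, D0, D1) and Z given X
    (hindep : ∀ φ : ℝ × ℝ × ℝ × ℝ → ℝ, Measurable φ →
      Integrable (fun ω => φ (Y0 ω, Y1 ω, D0 ω, D1 ω)) P →
      P[fun ω => φ (Y0 ω, Y1 ω, D0 ω, D1 ω) * Z ω | sigmaX X]
        =ᵐ[P] fun ω => (P[fun ω' => φ (Y0 ω', Y1 ω', D0 ω', D1 ω') | sigmaX X]) ω * g₀ ω)
    (κ1 : Ω → ℝ)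
    (hκ1 : ∀ ω, κ1 ω = D ω * (Z ω - g₀ ω) / (g₀ ω * (1 - g₀ ω))) :
    (∀ μ : 𝓧 → ℝ, Measurable μ → (∃ K, ∀ x, |μ x| ≤ K) →
      ∫ ω, κ1 ω * (Y ω - μ (X ω)) ^ 2 ∂P
        = ∫ ω, (if D0 ω < D1 ω then (Y1 ω - μ (X ω)) ^ 2 else 0) ∂P) ∧
    (∀ μ₀ : 𝓧 → ℝ, Measurable μ₀ → (∃ K, ∀ x, |μ₀ x| ≤ K) →
      -- μ₀ is the complier conditional mean of Y(1) given X: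
      ((fun ω => μ₀ (X ω) * (P[fun ω' => if D0 ω' < D1 ω' then (1 : ℝ) else 0 | sigmaX X]) ω)
          =ᵐ[P]
        P[fun ω' => Y1 ω' * (if D0 ω' < D1 ω' then (1 : ℝ) else 0) | sigmaX X]) →
      ∀ μ : 𝓧 → ℝ, Measurable μ → (∃ K, ∀ x, |μ x| ≤ K) →
        ∫ ω, κ1 ω * (Y ω - μ₀ (X ω)) ^ 2 ∂P ≤ ∫ ω, κ1 ω * (Y ω - μ (X ω)) ^ 2 ∂P) := by
  have hm : sigmaX X ≤ ‹MeasurableSpace Ω› := hX.comap_le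
  have hXm : Measurable[sigmaX X] X := Measurable.of_comap_le le_rfl
  have hY1 : MemLp Y1 2 P := (memLp_two_iff_integrable_sq hY1m.aestronglyMeasurable).2 hY1sq
  have hcondUncorr (φ : ℝ × ℝ × ℝ × ℝ → ℝ) (hφ : Measurable φ)
      (hint : Integrable (fun ω => φ (Y0 ω, Y1 ω, D0 ω, D1 ω)) P) :
      CondUncorrelated P (sigmaX X) (fun ω => φ (Y0 ω, Y1 ω, D0 ω, D1 ω)) Z :=
    (hindep φ hφ hint).trans (hg₀.mono fun ω h => by simp only [Pi.mul_apply, h])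
  have hcomplier : ∀ μ : 𝓧 → ℝ, Measurable μ → (∃ K, ∀ x, |μ x| ≤ K) →
      ∫ ω, κ1 ω * (Y ω - μ (X ω)) ^ 2 ∂P
        = ∫ ω, (if D0 ω < D1 ω then (Y1 ω - μ (X ω)) ^ 2 else 0) ∂P := by
    rintro μ hμ ⟨K, hK⟩
    exact integral_kappa_mul_sq_sub hm hZm hD0m hD1m hZ01 hD0 hD1 hconsD hconsY hmono hY1 hg₀
      hpos (fun φ hφ => hcondUncorr (fun p => φ (p.2.1, p.2.2.1)) (by fun_prop))
      (fun φ hφ => hcondUncorr (fun p => φ (p.2.1, p.2.2.2)) (by fun_prop))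
      hκ1 (hμ.comp hXm).stronglyMeasurable (.of_forall fun ω => hK (X ω))
  refine ⟨hcomplier, fun μ₀ hμ₀ ⟨K₀, hK₀⟩ hμ₀eq μ hμ ⟨K, hK⟩ => ?_⟩
  set c : Ω → ℝ := fun ω => if D0 ω < D1 ω then 1 else 0 with hc
  have hc01 (ω : Ω) : c ω = 0 ∨ c ω = 1 := by by_cases h : D0 ω < D1 ω <;> simp [c, h]
  rw [hcomplier μ₀ hμ₀ ⟨K₀, hK₀⟩, hcomplier μ hμ ⟨K, hK⟩]
  simpa only [hc, ite_mul, one_mul, zero_mul, Function.comp_apply] using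
    integral_mul_sq_sub_le_of_condExp hm
      (measurable_const.ite (measurableSet_lt hD0m hD1m) measurable_const).aestronglyMeasurable
      (.of_forall fun ω => nonneg_of_eq_zero_or_eq_one (hc01 ω))
      (.of_forall fun ω => norm_le_one_of_eq_zero_or_eq_one (hc01 ω))
      hY1 (hμ₀.comp hXm).stronglyMeasurable (.of_forall fun ω => hK₀ (X ω))
      (hμ.comp hXm).stronglyMeasurable (.of_forall fun ω => hK (X ω)) hμ₀eq

/-- Kappa-reweighted least squares identifies the local average response
function under treatment: E[κ¹ (Y-μ(X))²] equals the complier-restricted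
squared error, and the complier conditional mean μ₀ minimizes it. -/
theorem stmt16 {Ω 𝓧 : Type*} [MeasurableSpace Ω] [MeasurableSpace 𝓧]
    (P : Measure Ω) [IsProbabilityMeasure P]
    (X : Ω → 𝓧) (hX : Measurable X)
    (Z D D0 D1 Y Y0 Y1 : Ω → ℝ)
    (hZm : Measurable Z) (hD0m : Measurable D0) (hD1m : Measurable D1)
    (hY0m : Measurable Y0) (hY1m : Measurable Y1)
    (hZ01 : ∀ ω, Z ω = 0 ∨ Z ω = 1)
    (hD0 : ∀ ω, D0 ω = 0 ∨ D0 ω = 1) (hD1 : ∀ ω, D1 ω = 0 ∨ D1 ω = 1)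
    (hconsD : ∀ ω, D ω = Z ω * D1 ω + (1 - Z ω) * D0 ω)
    (hconsY : ∀ ω, Y ω = D ω * Y1 ω + (1 - D ω) * Y0 ω)
    (hmono : ∀ᵐ ω ∂P, D0 ω ≤ D1 ω)
    (hY1sq : Integrable (fun ω => (Y1 ω) ^ 2) P)
    (g₀ : Ω → ℝ) (hg₀ : g₀ =ᵐ[P] P[Z | sigmaX X])
    (hpos : ∀ᵐ ω ∂P, 0 < g₀ ω ∧ g₀ ω < 1)
    -- conditional independence of (Y0, Y1, D0, D1) and Z given X
    (hindep : ∀ φ : ℝ × ℝ × ℝ × ℝ → ℝ, Measurable φ →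
      Integrable (fun ω => φ (Y0 ω, Y1 ω, D0 ω, D1 ω)) P →
      P[fun ω => φ (Y0 ω, Y1 ω, D0 ω, D1 ω) * Z ω | sigmaX X]
        =ᵐ[P] fun ω => (P[fun ω' => φ (Y0 ω', Y1 ω', D0 ω', D1 ω') | sigmaX X]) ω * g₀ ω)
    (κ1 : Ω → ℝ)
    (hκ1 : ∀ ω, κ1 ω = D ω * (Z ω - g₀ ω) / (g₀ ω * (1 - g₀ ω)))
    (hcompl : 0 < (P {ω | D0 ω < D1 ω}).toReal) :
    (∀ μ : 𝓧 → ℝ, Measurable μ → (∃ K, ∀ x, |μ x| ≤ K) →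
      ∫ ω, κ1 ω * (Y ω - μ (X ω)) ^ 2 ∂P
        = ∫ ω, (if D0 ω < D1 ω then (Y1 ω - μ (X ω)) ^ 2 else 0) ∂P) ∧
    (∀ μ₀ : 𝓧 → ℝ, Measurable μ₀ → (∃ K, ∀ x, |μ₀ x| ≤ K) →
      -- μ₀ is the complier conditional mean of Y(1) given X:
      ((fun ω => μ₀ (X ω) * (P[fun ω' => if D0 ω' < D1 ω' then (1 : ℝ) else 0 | sigmaX X]) ω)
          =ᵐ[P]
        P[fun ω' => Y1 ω' * (if D0 ω' < D1 ω' then (1 : ℝ) else 0) | sigmaX X]) →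
      ∀ μ : 𝓧 → ℝ, Measurable μ → (∃ K, ∀ x, |μ x| ≤ K) →
        ∫ ω, κ1 ω * (Y ω - μ₀ (X ω)) ^ 2 ∂P ≤ ∫ ω, κ1 ω * (Y ω - μ (X ω)) ^ 2 ∂P) :=
  stmt16_general P X hX Z D D0 D1 Y Y0 Y1 hZm hD0m hD1m hY1m hZ01 hD0 hD1 hconsD hconsY hmono hY1sq
    g₀ hg₀ hpos hindep κ1 hκ1
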